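/- arXiv:1603.08367 — 8 statements merged into one kernel-verified Lean document; each statement's English description precedes it below -/
import Mathlib

section
/- If two pairs of positive target norms (λ₁, λ₂) and (λ̃₁, λ̃₂) satisfy λ₁/λ₂ = λ̃₁/λ̃₂, then the set of best approximations satisfies proj_{S^{(λ₁,λ₂)}}(x) = (λ₂/λ̃₂) · proj_{S^{(λ̃₁,λ̃₂)}}(x) for all x ∈ ℝⁿ; i.e., p is a closest point to x in S^{(λ₁,λ₂)} iff (λ̃₂/λ₂)·p is a closest point to x in S^{(λ̃₁,λ̃₂)}. -/
open Pointwise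

noncomputable section

def l1 {n : ℕ} (x : EuclideanSpace ℝ (Fin n)) : ℝ := ∑ i, |x i|

def projSet {n : ℕ} (M : Set (EuclideanSpace ℝ (Fin n))) (x : EuclideanSpace ℝ (Fin n)) :
    Set (EuclideanSpace ℝ (Fin n)) :=
  {p | p ∈ M ∧ ∀ q ∈ M, ‖p - x‖ ≤ ‖q - x‖}

/-- The target set of the sparseness projection. -/
def sparseTarget {n : ℕ} (l₁ l₂ : ℝ) : Set (EuclideanSpace ℝ (Fin n)) :=
  {s | l1 s = l₁ ∧ ‖s‖ = l₂}

/-! Both target sets lie on spheres about the origin, and on a sphere the points closest to `x`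
are exactly the maximisers of `⟪·, x⟫`, because `‖p - x‖² = ‖p‖² - 2⟪p, x⟫ + ‖x‖²`. Maximisers
of a linear functional are preserved by positive scalings, and by homogeneity of the two norms
the scaling by `λ₂ / λ̃₂` carries `S^{(λ̃₁,λ̃₂)}` onto `S^{(λ₁,λ₂)}` when the ratios agree. -/

theorem norm_sub_le_norm_sub_iff_inner_le {E : Type*} [NormedAddCommGroup E]
    [InnerProductSpace ℝ E] {p q : E} (x : E) (h : ‖p‖ = ‖q‖) :
    ‖p - x‖ ≤ ‖q - x‖ ↔ inner ℝ q x ≤ inner ℝ p x := by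
  rw [← sq_le_sq₀ (norm_nonneg _) (norm_nonneg _), norm_sub_sq_real, norm_sub_sq_real, h]
  constructor <;> intro <;> linarith

theorem projSet_eq_of_norm_eq {n : ℕ} {M : Set (EuclideanSpace ℝ (Fin n))} {r : ℝ}
    (hM : ∀ p ∈ M, ‖p‖ = r) (x : EuclideanSpace ℝ (Fin n)) :
    projSet M x = {p | p ∈ M ∧ ∀ q ∈ M, inner ℝ q x ≤ inner ℝ p x} := by
  ext p
  refine and_congr_right fun hp => forall₂_congr fun q hq => ?_
  exact norm_sub_le_norm_sub_iff_inner_le x ((hM p hp).trans (hM q hq).symm)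

theorem projSet_smul_of_norm_eq {n : ℕ} {M : Set (EuclideanSpace ℝ (Fin n))} {r : ℝ}
    (hM : ∀ p ∈ M, ‖p‖ = r) {c : ℝ} (hc : 0 < c) (x : EuclideanSpace ℝ (Fin n)) :
    projSet (c • M) x = c • projSet M x := by
  have hcM : ∀ p ∈ c • M, ‖p‖ = c * r := by
    rintro _ ⟨p, hp, rfl⟩
    rw [norm_smul, Real.norm_of_nonneg hc.le, hM p hp]
  rw [projSet_eq_of_norm_eq hcM, projSet_eq_of_norm_eq hM]
  ext p
  simp only [Set.mem_smul_set, Set.mem_ofPred_eq, forall_exists_index, and_imp,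
    forall_apply_eq_imp_iff₂]
  constructor
  · rintro ⟨⟨p, hp, rfl⟩, hmax⟩
    refine ⟨p, ⟨hp, fun q hq => ?_⟩, rfl⟩
    have := hmax q hq
    rw [real_inner_smul_left, real_inner_smul_left] at this
    exact le_of_mul_le_mul_left this hc
  · rintro ⟨p, ⟨hp, hmax⟩, rfl⟩
    refine ⟨⟨p, hp, rfl⟩, fun q hq => ?_⟩
    rw [real_inner_smul_left, real_inner_smul_left]
    exact mul_le_mul_of_nonneg_left (hmax q hq) hc.le

theorem l1_smul {n : ℕ} (c : ℝ) (x : EuclideanSpace ℝ (Fin n)) : l1 (c • x) = |c| * l1 x := by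
  simp [l1, Finset.mul_sum, abs_mul]

theorem smul_sparseTarget {n : ℕ} {c : ℝ} (hc : 0 < c) (l₁ l₂ : ℝ) :
    c • sparseTarget (n := n) l₁ l₂ = sparseTarget (c * l₁) (c * l₂) := by
  ext s
  rw [Set.mem_smul_set_iff_inv_smul_mem₀ hc.ne']
  simp only [sparseTarget, Set.mem_ofPred_eq, l1_smul, norm_smul, Real.norm_eq_abs,
    abs_of_pos (inv_pos.2 hc), inv_mul_eq_iff_eq_mul₀ hc.ne']

theorem projection_scaling_general
    {n : ℕ} (l₁ l₂ l₁' l₂' : ℝ) (h2 : 0 < l₂)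
    (h2' : 0 < l₂') (hratio : l₁ / l₂ = l₁' / l₂')
    (x : EuclideanSpace ℝ (Fin n)) :
    projSet (sparseTarget l₁ l₂) x = (l₂ / l₂') • projSet (sparseTarget l₁' l₂') x := by
  have hc : 0 < l₂ / l₂' := div_pos h2 h2'
  have hS : sparseTarget (n := n) l₁ l₂ = (l₂ / l₂') • sparseTarget l₁' l₂' := by
    rw [smul_sparseTarget hc, div_mul_cancel₀ l₂ h2'.ne']
    congr 1
    rw [div_eq_div_iff h2.ne' h2'.ne'] at hratio
    field_simp
    linarith
  rw [hS]
  exact projSet_smul_of_norm_eq (fun p hp => hp.2) hc x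

theorem projection_scaling
    {n : ℕ} (l₁ l₂ l₁' l₂' : ℝ) (h1 : 0 < l₁) (h2 : 0 < l₂)
    (h1' : 0 < l₁') (h2' : 0 < l₂') (hratio : l₁ / l₂ = l₁' / l₂')
    (x : EuclideanSpace ℝ (Fin n)) :
    projSet (sparseTarget l₁ l₂) x = (l₂ / l₂') • projSet (sparseTarget l₁' l₂') x :=
  projection_scaling_general l₁ l₂ l₁' l₂' h2 h2' hratio x

end
end

section
/- If M ⊆ ℝⁿ is nonempty and permutation-invariant, then the Euclidean projection onto M is order-preserving: for any x ∈ ℝⁿ, any p ∈ proj_M(x), and indices i, j with x_i > x_j, it holds that p_i ≥ p_j. -/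
/-! Swapping the coordinates `i` and `j` of `p` keeps it in `M` and preserves `‖p‖`, so it changes
`‖p - x‖²` only through `⟪p, x⟫`, namely by `2 (p i - p j)(x i - x j)`. Minimality of `p` makes
this change nonnegative, which forces `p j ≤ p i` when `x j < x i`. -/

noncomputable section

/-- M is permutation-invariant: membership is stable under coordinate permutations. -/
def PermInvariant {n : ℕ} (M : Set (EuclideanSpace ℝ (Fin n))) : Prop :=
  ∀ x ∈ M, ∀ τ : Equiv.Perm (Fin n), (WithLp.toLp 2 (fun i => x (τ i)) : EuclideanSpace ℝ (Fin n)) ∈ M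

namespace EuclideanSpace

variable {ι : Type*} [Fintype ι]

theorem norm_comp_perm (p : EuclideanSpace ℝ ι) (τ : Equiv.Perm ι) :
    ‖(WithLp.toLp 2 (fun k => p (τ k)) : EuclideanSpace ℝ ι)‖ = ‖p‖ := by
  simp only [EuclideanSpace.norm_eq]
  exact congrArg Real.sqrt (Equiv.sum_comp τ fun k => ‖p k‖ ^ 2)

variable [DecidableEq ι]

theorem norm_swap_sub_sq (p x : EuclideanSpace ℝ ι) (i j : ι) :
    ‖(WithLp.toLp 2 (fun k => p (Equiv.swap i j k)) : EuclideanSpace ℝ ι) - x‖ ^ 2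
      = ‖p - x‖ ^ 2 + 2 * ((p i - p j) * (x i - x j)) := by
  rcases eq_or_ne i j with rfl | hij
  · simp
  set q : EuclideanSpace ℝ ι := WithLp.toLp 2 (fun k => p (Equiv.swap i j k))
  have hinner : inner ℝ p x - inner ℝ q x = (p i - p j) * (x i - x j) := by
    rw [← inner_sub_left, PiLp.inner_apply, Fintype.sum_eq_add i j hij]
    · simp only [PiLp.sub_apply, Equiv.swap_apply_left, Equiv.swap_apply_right,
        RCLike.inner_apply, Real.ringHom_apply, q]
      ring
    · intro k hk
      simp [q, Equiv.swap_apply_of_ne_of_ne hk.1 hk.2]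
  rw [norm_sub_sq_real, norm_sub_sq_real, norm_comp_perm, ← hinner]
  ring

end EuclideanSpace

theorem PermInvariant.mul_sub_nonneg_of_mem_projSet {n : ℕ} {M : Set (EuclideanSpace ℝ (Fin n))}
    (hperm : PermInvariant M) {x p : EuclideanSpace ℝ (Fin n)} (hp : p ∈ projSet M x)
    (i j : Fin n) : 0 ≤ (p i - p j) * (x i - x j) := by
  have hswap := hp.2 _ (hperm p hp.1 (Equiv.swap i j))
  have hsq := pow_le_pow_left₀ (norm_nonneg _) hswap 2
  rw [EuclideanSpace.norm_swap_sub_sq] at hsq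
  linarith

theorem projection_onto_perm_invariant_is_order_preserving_general
    {n : ℕ} (M : Set (EuclideanSpace ℝ (Fin n)))
    (hperm : PermInvariant M)
    (x : EuclideanSpace ℝ (Fin n)) (p : EuclideanSpace ℝ (Fin n))
    (hp : p ∈ projSet M x) (i j : Fin n) (hij : x j < x i) :
    p j ≤ p i :=
  sub_nonneg.mp <| nonneg_of_mul_nonneg_left
    (hperm.mul_sub_nonneg_of_mem_projSet hp i j) (sub_pos.mpr hij)

theorem projection_onto_perm_invariant_is_order_preserving
    {n : ℕ} (M : Set (EuclideanSpace ℝ (Fin n))) (hM : M.Nonempty)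
    (hperm : PermInvariant M)
    (x : EuclideanSpace ℝ (Fin n)) (p : EuclideanSpace ℝ (Fin n))
    (hp : p ∈ projSet M x) (i j : Fin n) (hij : x j < x i) :
    p j ≤ p i :=
  projection_onto_perm_invariant_is_order_preserving_general M hperm x p hp i j hij

end
end

section
/- If M ⊆ ℝⁿ is nonempty, permutation-invariant, and the projection of x onto M is a unique point p, then x_i = x_j implies p_i = p_j. -/
noncomputable section

/-! Swapping the coordinates `i` and `j` fixes `x`, so it is an isometry of `ℝⁿ` fixing `x` and
preserving `M`; it therefore maps nearest points of `M` to nearest points of `M`. If the nearest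
point `p` is unique, it must be fixed by the swap, i.e. `p i = p j`. -/

theorem EuclideanSpace.norm_toLp_comp_perm {ι : Type*} [Fintype ι] (v : EuclideanSpace ℝ ι)
    (σ : Equiv.Perm ι) : ‖(WithLp.toLp 2 (fun k => v (σ k)) : EuclideanSpace ℝ ι)‖ = ‖v‖ := by
  simp only [EuclideanSpace.norm_eq]
  rw [Equiv.sum_comp σ (fun k => ‖v k‖ ^ 2)]

theorem perm_mem_projSet {n : ℕ} {M : Set (EuclideanSpace ℝ (Fin n))} (hperm : PermInvariant M)
    {x p : EuclideanSpace ℝ (Fin n)} (hp : p ∈ projSet M x) (σ : Equiv.Perm (Fin n))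
    (hxσ : ∀ k, x (σ k) = x k) :
    (WithLp.toLp 2 (fun k => p (σ k)) : EuclideanSpace ℝ (Fin n)) ∈ projSet M x := by
  obtain ⟨hpM, hpmin⟩ := hp
  have hdist : ‖(WithLp.toLp 2 (fun k => p (σ k)) : EuclideanSpace ℝ (Fin n)) - x‖ = ‖p - x‖ := by
    rw [← EuclideanSpace.norm_toLp_comp_perm (p - x) σ]
    congr 2
    ext k
    simp [hxσ k]
  exact ⟨hperm p hpM σ, fun q hq => hdist ▸ hpmin q hq⟩

theorem unique_proj_equal_entries_general
    {n : ℕ} (M : Set (EuclideanSpace ℝ (Fin n)))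
    (hperm : PermInvariant M)
    (x p : EuclideanSpace ℝ (Fin n)) (hp : projSet M x = {p})
    (i j : Fin n) (hij : x i = x j) :
    p i = p j := by
  have hp_mem : p ∈ projSet M x := hp ▸ rfl
  have h_swap_mem := perm_mem_projSet hperm hp_mem (Equiv.swap i j)
    (Equiv.apply_swap_eq_self (v := x.ofLp) hij)
  rw [hp, Set.mem_singleton_iff] at h_swap_mem
  simpa using congrArg (fun v : EuclideanSpace ℝ (Fin n) => v j) h_swap_mem

theorem unique_proj_equal_entries
    {n : ℕ} (M : Set (EuclideanSpace ℝ (Fin n))) (hM : M.Nonempty)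
    (hperm : PermInvariant M)
    (x p : EuclideanSpace ℝ (Fin n)) (hp : projSet M x = {p})
    (i j : Fin n) (hij : x i = x j) :
    p i = p j :=
  unique_proj_equal_entries_general M hperm x p hp i j hij

end
end

section
/- If M ⊆ ℝⁿ is nonempty, permutation-invariant and reflection-invariant, then the Euclidean projection onto M is absolutely order-preserving: for all x ∈ ℝⁿ, p ∈ proj_M(x), and indices i, j with |x_i| > |x_j|, it holds that |p_i| ≥ |p_j|. -/
/-!
If `|p j| > |p i|` while `|x i| > |x j|`, swap `p i` and `p j` and give each the sign of the
coordinate of `x` it now faces. The new point lies in `M` by the two invariances, and it is strictly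
closer to `x` by the strict rearrangement inequality
`|p i| |x i| + |p j| |x j| < |p j| |x i| + |p i| |x j|`; this contradicts `p ∈ proj_M(x)`.
-/

noncomputable section

def ReflInvariant {n : ℕ} (M : Set (EuclideanSpace ℝ (Fin n))) : Prop :=
  ∀ x ∈ M, ∀ b : Fin n → ℝ, (∀ i, b i = 1 ∨ b i = -1) →
    (WithLp.toLp 2 (fun i => b i * x i) : EuclideanSpace ℝ (Fin n)) ∈ M

lemma exists_sign_mul_eq_abs (a : ℝ) : ∃ s : ℝ, (s = 1 ∨ s = -1) ∧ s * a = |a| := by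
  rcases abs_choice a with h | h
  · exact ⟨1, .inl rfl, by rw [h, one_mul]⟩
  · exact ⟨-1, .inr rfl, by rw [h, neg_one_mul]⟩

lemma exists_signs_swap_sq_add_sq_lt {a b u v : ℝ} (huv : |v| < |u|) (hab : |a| < |b|) :
    ∃ s t : ℝ, (s = 1 ∨ s = -1) ∧ (t = 1 ∨ t = -1) ∧
      (s * b - u) ^ 2 + (t * a - v) ^ 2 < (a - u) ^ 2 + (b - v) ^ 2 := by
  obtain ⟨s, hs, hsbu⟩ := exists_sign_mul_eq_abs (b * u)
  obtain ⟨t, ht, htav⟩ := exists_sign_mul_eq_abs (a * v)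
  refine ⟨s, t, hs, ht, ?_⟩
  have hs2 : s ^ 2 = 1 := by rcases hs with rfl | rfl <;> norm_num
  have ht2 : t ^ 2 = 1 := by rcases ht with rfl | rfl <;> norm_num
  have hsb : (s * b - u) ^ 2 = b ^ 2 + u ^ 2 - 2 * (|b| * |u|) := by
    rw [← abs_mul, ← hsbu]; linear_combination b ^ 2 * hs2
  have hta : (t * a - v) ^ 2 = a ^ 2 + v ^ 2 - 2 * (|a| * |v|) := by
    rw [← abs_mul, ← htav]; linear_combination a ^ 2 * ht2
  have hau : a * u ≤ |a| * |u| := abs_mul a u ▸ le_abs_self _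
  have hbv : b * v ≤ |b| * |v| := abs_mul b v ▸ le_abs_self _
  have hrearr : 0 < (|b| - |a|) * (|u| - |v|) := mul_pos (by linarith) (by linarith)
  rw [hsb, hta]
  nlinarith

variable {n : ℕ}

def signedSwap (p : EuclideanSpace ℝ (Fin n)) (i j : Fin n) (s t : ℝ) :
    EuclideanSpace ℝ (Fin n) :=
  WithLp.toLp 2 fun k => if k = i then s * p j else if k = j then t * p i else p k

lemma signedSwap_mem {M : Set (EuclideanSpace ℝ (Fin n))} (hperm : PermInvariant M)
    (hrefl : ReflInvariant M) {p : EuclideanSpace ℝ (Fin n)} (hp : p ∈ M) (i j : Fin n)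
    {s t : ℝ} (hs : s = 1 ∨ s = -1) (ht : t = 1 ∨ t = -1) : signedSwap p i j s t ∈ M := by
  let b : Fin n → ℝ := fun k => if k = i then s else if k = j then t else 1
  have hb : ∀ k, b k = 1 ∨ b k = -1 := fun k => by
    simp only [b]; split_ifs <;> simp [hs, ht]
  convert hrefl _ (hperm p hp (Equiv.swap i j)) b hb using 2
  funext k
  simp only [signedSwap, b]
  split_ifs with hki hkj
  · rw [hki, Equiv.swap_apply_left]
  · rw [hkj, Equiv.swap_apply_right]
  · rw [Equiv.swap_apply_of_ne_of_ne hki hkj, one_mul]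

lemma norm_sub_lt_of_eq_off_pair {ι : Type*} [Fintype ι] {p q x : EuclideanSpace ℝ ι}
    {i j : ι} (hij : i ≠ j) (hq : ∀ k, k ≠ i → k ≠ j → q k = p k)
    (hlt : (q i - x i) ^ 2 + (q j - x j) ^ 2 < (p i - x i) ^ 2 + (p j - x j) ^ 2) :
    ‖q - x‖ < ‖p - x‖ := by
  classical
  rw [← sq_lt_sq₀ (norm_nonneg _) (norm_nonneg _), EuclideanSpace.real_norm_sq_eq,
    EuclideanSpace.real_norm_sq_eq, ← sub_neg, ← Finset.sum_sub_distrib,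
    ← Finset.sum_subset (Finset.subset_univ {i, j}), Finset.sum_pair hij]
  · simp only [WithLp.ofLp_sub, Pi.sub_apply]
    linarith
  · intro k _ hk
    simp only [Finset.mem_insert, Finset.mem_singleton, not_or] at hk
    simp [hq k hk.1 hk.2]

theorem projection_absolutely_order_preserving_general
    {n : ℕ} (M : Set (EuclideanSpace ℝ (Fin n)))
    (hperm : PermInvariant M) (hrefl : ReflInvariant M)
    (x p : EuclideanSpace ℝ (Fin n)) (hp : p ∈ projSet M x)
    (i j : Fin n) (hij : |x j| < |x i|) :
    |p j| ≤ |p i| := by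
  by_contra! hp_lt
  have hne : i ≠ j := by rintro rfl; exact hij.false
  obtain ⟨s, t, hs, ht, hlt⟩ := exists_signs_swap_sq_add_sq_lt hij hp_lt
  refine (hp.2 _ (signedSwap_mem hperm hrefl hp.1 i j hs ht)).not_gt
    (norm_sub_lt_of_eq_off_pair hne (fun k hki hkj => ?_) ?_)
  · simp [signedSwap, hki, hkj]
  · simpa [signedSwap, hne.symm] using hlt

theorem projection_absolutely_order_preserving
    {n : ℕ} (M : Set (EuclideanSpace ℝ (Fin n))) (hM : M.Nonempty)
    (hperm : PermInvariant M) (hrefl : ReflInvariant M)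
    (x p : EuclideanSpace ℝ (Fin n)) (hp : p ∈ projSet M x)
    (i j : Fin n) (hij : |x j| < |x i|) :
    |p j| ≤ |p i| :=
  projection_absolutely_order_preserving_general M hperm hrefl x p hp i j hij

end
end

section
/- Let r ∈ H with r ≠ m, where m = (λ₁/n)e, and set s = m + δ(r − m) with δ = √ρ/‖r − m‖₂ and ρ = λ₂² − λ₁²/n ≥ 0. Then s ∈ L = H ∩ K, and for every q ∈ L it holds that ‖q − r‖₂² − ‖s − r‖₂² = (1/δ)‖q − s‖₂². Consequently s is the unique projection of r onto L. -/
/-!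
Since `∑ i, a i = λ₁` says exactly that `a - m ⟂ m`, Pythagoras identifies `L` with the sphere
of radius `√ρ` about `m` inside `H`, and `s` is the radial projection of `r` onto that sphere.
For `q` on the sphere of radius `R` about `c` and `s = c + (R / ‖r - c‖) • (r - c)`, expanding
the squares gives `R * (‖q - r‖² - ‖s - r‖²) = ‖r - c‖ * ‖q - s‖²`, whose right side is
nonnegative and vanishes only at `q = s`.
-/

noncomputable section

open Metric
open scoped RealInnerProductSpace

section InnerProductSpace

variable {E : Type*} [NormedAddCommGroup E] [InnerProductSpace ℝ E]

def radialProj (c : E) (R : ℝ) (r : E) : E :=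
  c + (R / ‖r - c‖) • (r - c)

lemma radialProj_sub_center (c : E) (R : ℝ) (r : E) :
    radialProj c R r - c = (R / ‖r - c‖) • (r - c) :=
  add_sub_cancel_left _ _

lemma radialProj_mem_sphere {c r : E} {R : ℝ} (hrc : r ≠ c) (hR : 0 ≤ R) :
    radialProj c R r ∈ sphere c R := by
  have hd : ‖r - c‖ ≠ 0 := norm_ne_zero_iff.mpr (sub_ne_zero.mpr hrc)
  rw [mem_sphere_iff_norm, radialProj_sub_center, norm_smul, Real.norm_eq_abs,
    abs_of_nonneg (by positivity), div_mul_cancel₀ R hd]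

lemma radius_mul_sq_dist_sub_sq_dist_radialProj {c r q : E} {R : ℝ} (hrc : r ≠ c)
    (hq : q ∈ sphere c R) :
    R * (‖q - r‖ ^ 2 - ‖radialProj c R r - r‖ ^ 2) = ‖r - c‖ * ‖q - radialProj c R r‖ ^ 2 := by
  rw [mem_sphere_iff_norm] at hq
  have hd : ‖r - c‖ ≠ 0 := norm_ne_zero_iff.mpr (sub_ne_zero.mpr hrc)
  set d := ‖r - c‖
  set δ := R / d
  have hqr : q - r = (q - c) - (r - c) := by abel
  have hsr : radialProj c R r - r = (δ - 1) • (r - c) := by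
    rw [radialProj, sub_smul, one_smul]; abel
  have hqs : q - radialProj c R r = (q - c) - δ • (r - c) := by
    rw [radialProj]; abel
  have hqr_sq : ‖(q - c) - (r - c)‖ ^ 2 = R ^ 2 - 2 * ⟪q - c, r - c⟫ + d ^ 2 := by
    rw [norm_sub_sq_real, hq]
  have hsr_sq : ‖(δ - 1) • (r - c)‖ ^ 2 = (δ - 1) ^ 2 * d ^ 2 := by
    rw [norm_smul, mul_pow, Real.norm_eq_abs, sq_abs]
  have hqs_sq : ‖(q - c) - δ • (r - c)‖ ^ 2 = R ^ 2 - 2 * δ * ⟪q - c, r - c⟫ + δ ^ 2 * d ^ 2 := by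
    rw [norm_sub_sq_real, inner_smul_right, norm_smul, mul_pow, Real.norm_eq_abs, sq_abs, hq]
    ring
  rw [hqr, hsr, hqs, hqr_sq, hsr_sq, hqs_sq]
  simp only [δ]
  field_simp
  ring

lemma sq_dist_sub_sq_dist_radialProj {c r q : E} {R : ℝ} (hrc : r ≠ c) (hq : q ∈ sphere c R) :
    ‖q - r‖ ^ 2 - ‖radialProj c R r - r‖ ^ 2 = ‖r - c‖ / R * ‖q - radialProj c R r‖ ^ 2 := by
  rcases eq_or_ne R 0 with rfl | hR
  · have hqc : q = c := by simpa [sub_eq_zero] using hq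
    simp [hqc, radialProj]
  · rw [div_mul_eq_mul_div, eq_div_iff hR, mul_comm,
      radius_mul_sq_dist_sub_sq_dist_radialProj hrc hq]

lemma norm_eq_iff_norm_sub_eq_sqrt {m a : E} {l : ℝ} (ha : ⟪a - m, m⟫ = 0) (hl : 0 ≤ l)
    (hml : ‖m‖ ^ 2 ≤ l ^ 2) :
    ‖a‖ = l ↔ ‖a - m‖ = √(l ^ 2 - ‖m‖ ^ 2) := by
  have hpyth : ‖a‖ ^ 2 = ‖a - m‖ ^ 2 + ‖m‖ ^ 2 := by
    simpa [sq] using norm_add_sq_eq_norm_sq_add_norm_sq_real ha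
  rw [eq_comm (b := √_), Real.sqrt_eq_iff_eq_sq (by linarith) (norm_nonneg _),
    ← pow_left_inj₀ (norm_nonneg a) hl two_ne_zero]
  constructor <;> intro h <;> linarith

end InnerProductSpace

lemma projSet_eq_singleton_radialProj {n : ℕ} {M : Set (EuclideanSpace ℝ (Fin n))}
    {c r : EuclideanSpace ℝ (Fin n)} {R : ℝ} (hM : M ⊆ sphere c R) (hrc : r ≠ c)
    (hsM : radialProj c R r ∈ M) :
    projSet M r = {radialProj c R r} := by
  set s := radialProj c R r
  ext p
  refine ⟨fun ⟨hpM, hmin⟩ => ?_, fun hp => ?_⟩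
  · have hle : ‖p - r‖ ^ 2 ≤ ‖s - r‖ ^ 2 := by gcongr; exact hmin s hsM
    have hmul : ‖r - c‖ * ‖p - s‖ ^ 2 ≤ 0 :=
      radius_mul_sq_dist_sub_sq_dist_radialProj hrc (hM hpM) ▸
        mul_nonpos_of_nonneg_of_nonpos (nonneg_of_mem_sphere (hM hpM)) (sub_nonpos.mpr hle)
    have hps : ‖p - s‖ ^ 2 = 0 :=
      (nonpos_of_mul_nonpos_right hmul (norm_pos_iff.mpr (sub_ne_zero.mpr hrc))).antisymm
        (sq_nonneg _)
    simpa [sub_eq_zero] using hps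
  · rw [Set.mem_singleton_iff.mp hp]
    refine ⟨hsM, fun q hq => ?_⟩
    have hR : 0 ≤ R := nonneg_of_mem_sphere (hM hq)
    have hexcess : 0 ≤ ‖q - r‖ ^ 2 - ‖s - r‖ ^ 2 :=
      sq_dist_sub_sq_dist_radialProj hrc (hM hq) ▸ by positivity
    exact (pow_le_pow_iff_left₀ (norm_nonneg _) (norm_nonneg _) two_ne_zero).mp
      (sub_nonneg.mp hexcess)

lemma inner_toLp_const {n : ℕ} (a : EuclideanSpace ℝ (Fin n)) (t : ℝ) :
    ⟪a, WithLp.toLp 2 (fun _ => t)⟫ = (∑ i, a i) * t := by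
  simp [PiLp.inner_apply, Finset.mul_sum, mul_comm]

lemma norm_toLp_const_sq {n : ℕ} (t : ℝ) :
    ‖(WithLp.toLp 2 (fun _ => t) : EuclideanSpace ℝ (Fin n))‖ ^ 2 = n * t ^ 2 := by
  rw [← real_inner_self_eq_norm_sq, inner_toLp_const]
  simp only [Finset.sum_const, Finset.card_univ, Fintype.card_fin, nsmul_eq_mul]
  ring

lemma sum_eq_iff_inner_sub_toLp_const_eq_zero {n : ℕ} (hn : 0 < n) {t : ℝ} (ht : t ≠ 0)
    (a : EuclideanSpace ℝ (Fin n)) :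
    ∑ i, a i = t ↔
      ⟪a - WithLp.toLp 2 (fun _ => t / n), WithLp.toLp 2 (fun _ => t / n)⟫ = 0 := by
  have hn' : (n : ℝ) ≠ 0 := by positivity
  rw [inner_sub_left, inner_toLp_const, inner_toLp_const]
  simp [field, sub_eq_zero, ht, hn']

theorem proj_onto_hypercircle
    {n : ℕ} (hn : 0 < n) (l₁ l₂ : ℝ) (h1 : 0 < l₁) (h2 : 0 < l₂)
    (hcompat : l₁ ≤ Real.sqrt n * l₂)
    (H K L : Set (EuclideanSpace ℝ (Fin n)))
    (hH : H = {a | ∑ i, a i = l₁})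
    (hK : K = {q | ‖q‖ = l₂})
    (hL : L = H ∩ K)
    (m : EuclideanSpace ℝ (Fin n)) (hm : m = (WithLp.toLp 2 (fun _ => l₁ / n) : EuclideanSpace ℝ (Fin n)))
    (ρ : ℝ) (hρ : ρ = l₂ ^ 2 - l₁ ^ 2 / n)
    (r : EuclideanSpace ℝ (Fin n)) (hr : r ∈ H) (hrm : r ≠ m)
    (δ : ℝ) (hδ : δ = Real.sqrt ρ / ‖r - m‖)
    (s : EuclideanSpace ℝ (Fin n)) (hs : s = m + δ • (r - m)) :
    s ∈ L ∧ (∀ q ∈ L, ‖q - r‖ ^ 2 - ‖s - r‖ ^ 2 = (1 / δ) * ‖q - s‖ ^ 2) ∧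
      projSet L r = {s} := by
  have hn' : (0 : ℝ) < n := by exact_mod_cast hn
  have hm_sq : ‖m‖ ^ 2 = l₁ ^ 2 / n := by
    rw [hm, norm_toLp_const_sq]; field_simp
  have hm_le : ‖m‖ ^ 2 ≤ l₂ ^ 2 := by
    have := pow_le_pow_left₀ h1.le hcompat 2
    rw [mul_pow, Real.sq_sqrt hn'.le] at this
    rw [hm_sq, div_le_iff₀ hn']; linarith
  rw [← hm_sq] at hρ
  have hH' : H = {a | ⟪a - m, m⟫ = 0} := by
    ext a; rw [hH, hm]; exact sum_eq_iff_inner_sub_toLp_const_eq_zero hn h1.ne' a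
  have hL' : L = H ∩ sphere m (√ρ) := by
    ext q
    rw [hL, hK, hρ, Set.mem_inter_iff, Set.mem_inter_iff, mem_sphere_iff_norm]
    refine and_congr_right fun hq => ?_
    rw [hH'] at hq
    exact norm_eq_iff_norm_sub_eq_sqrt hq h2.le hm_le
  have hs' : s = radialProj m (√ρ) r := by rw [hs, hδ, radialProj]
  have hsL : s ∈ L := by
    rw [hL', hs']
    refine ⟨?_, radialProj_mem_sphere hrm (Real.sqrt_nonneg ρ)⟩
    rw [hH'] at hr ⊢
    rw [Set.mem_ofPred_eq, radialProj_sub_center, inner_smul_left, hr, mul_zero]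
  refine ⟨hsL, fun q hq => ?_, ?_⟩
  · rw [hδ, one_div_div, hs']
    exact sq_dist_sub_sq_dist_radialProj hrm (hL' ▸ hq).2
  · rw [hs']
    exact projSet_eq_singleton_radialProj (hL' ▸ Set.inter_subset_right) hrm (hs' ▸ hsL)

end
end

section
/- The projection onto D = S≥0^{(λ₁,λ₂)} is invariant under positive affine transformations of the argument: for all α > 0, β ∈ ℝ, and x ∈ ℝⁿ, proj_D(αx + βe) = proj_D(x). -/
noncomputable section

/-! On a sphere, distance to `y` is decreasing in the inner product with `y`; an affine change
`x ↦ α x + β e` with `α > 0` changes `⟪s, x⟫` into `α ⟪s, x⟫ + β ∑ sᵢ`, and `∑ sᵢ = λ₁` is constant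
on `D`, so the order of the points of `D` by distance to `x` is unchanged. -/

open RealInnerProductSpace

theorem norm_sub_le_norm_sub_iff_inner_le_of_norm_eq {E : Type*} [NormedAddCommGroup E]
    [InnerProductSpace ℝ E] {p q : E} (y : E) (h : ‖p‖ = ‖q‖) :
    ‖p - y‖ ≤ ‖q - y‖ ↔ ⟪q, y⟫ ≤ ⟪p, y⟫ := by
  rw [← pow_le_pow_iff_left₀ (norm_nonneg _) (norm_nonneg _) two_ne_zero,
    norm_sub_sq_real, norm_sub_sq_real, h]
  constructor <;> intro <;> linarith

theorem projSet_eq_of_inner_eq_mul_add {n : ℕ} {M : Set (EuclideanSpace ℝ (Fin n))} {r : ℝ}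
    (hM : ∀ s ∈ M, ‖s‖ = r) {x y : EuclideanSpace ℝ (Fin n)} {α c : ℝ} (hα : 0 < α)
    (hxy : ∀ s ∈ M, ⟪s, y⟫ = α * ⟪s, x⟫ + c) :
    projSet M y = projSet M x := by
  ext p
  refine and_congr_right fun hp => forall₂_congr fun q hq => ?_
  have hpq : ‖p‖ = ‖q‖ := (hM p hp).trans (hM q hq).symm
  rw [norm_sub_le_norm_sub_iff_inner_le_of_norm_eq y hpq,
    norm_sub_le_norm_sub_iff_inner_le_of_norm_eq x hpq, hxy p hp, hxy q hq,
    add_le_add_iff_right, mul_le_mul_iff_right₀ hα]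

theorem l1_eq_sum_of_nonneg {n : ℕ} {s : EuclideanSpace ℝ (Fin n)} (hs : ∀ i, 0 ≤ s i) :
    l1 s = ∑ i, s i :=
  Finset.sum_congr rfl fun i _ => abs_of_nonneg (hs i)

theorem inner_toLp_mul_add {n : ℕ} (s x : EuclideanSpace ℝ (Fin n)) (α β : ℝ) :
    ⟪s, (WithLp.toLp 2 (fun i => α * x i + β) : EuclideanSpace ℝ (Fin n))⟫
      = α * ⟪s, x⟫ + β * ∑ i, s i := by
  simp only [PiLp.inner_apply, RCLike.inner_apply', conj_trivial, Finset.mul_sum,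
    ← Finset.sum_add_distrib]
  exact Finset.sum_congr rfl fun i _ => by ring

theorem proj_invariant_under_positive_affine_transformation_general
    {n : ℕ} (l₁ l₂ : ℝ)
    (D : Set (EuclideanSpace ℝ (Fin n)))
    (hD : D = {s | (∀ i, 0 ≤ s i) ∧ l1 s = l₁ ∧ ‖s‖ = l₂})
    (α β : ℝ) (hα : 0 < α) (x : EuclideanSpace ℝ (Fin n)) :
    projSet D ((WithLp.toLp 2 (fun i => α * x i + β) : EuclideanSpace ℝ (Fin n))) = projSet D x := by
  subst hD
  refine projSet_eq_of_inner_eq_mul_add (c := β * l₁) (fun s hs => hs.2.2) hα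
    fun s ⟨hs, hl1, _⟩ => ?_
  rw [inner_toLp_mul_add, ← l1_eq_sum_of_nonneg hs, hl1]

theorem proj_invariant_under_positive_affine_transformation
    {n : ℕ} (l₁ l₂ : ℝ) (h1 : 0 < l₁) (h2 : 0 < l₂)
    (hlow : l₂ ≤ l₁) (hhigh : l₁ ≤ Real.sqrt n * l₂)
    (D : Set (EuclideanSpace ℝ (Fin n)))
    (hD : D = {s | (∀ i, 0 ≤ s i) ∧ l1 s = l₁ ∧ ‖s‖ = l₂})
    (α β : ℝ) (hα : 0 < α) (x : EuclideanSpace ℝ (Fin n)) :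
    projSet D ((WithLp.toLp 2 (fun i => α * x i + β) : EuclideanSpace ℝ (Fin n))) = projSet D x :=
  proj_invariant_under_positive_affine_transformation_general l₁ l₂ D hD α β hα x

end
end

section
/- Let q be in the scaled canonical simplex C ⊆ ℝⁿ, let I ⊆ {1,…,n} be a nonempty index set, let J = Iᶜ, and let s be the Euclidean projection of q onto the face C_I = {c ∈ C : c_i = 0 for all i ∉ I}. Then ‖q − v‖₂² = ‖q − s‖₂² + ‖s − v‖₂² for all v ∈ C_I. If additionally max_{j∈J} q_j ≤ min_{i∈I} q_i, then ‖s‖₂ ≥ ‖q‖₂, with equality if and only if q_j = 0 for all j ∈ J. -/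
/-!
The projection is explicit: `p` keeps the coordinates of `q` on `I`, zeroes those on `J` and
spreads their total mass `S = ∑_J q_j` evenly over `I`, adding `t = S / |I|` to each `q_i`.
Then `q - p` is `-t` on `I` and `q` on `J`, hence orthogonal to every `p - v` with `v` supported
on `I` and of the same total mass, so `p` is the projection of `q` onto that affine plane; since
`q ≥ 0`, `p` lies in the face, which gives the Pythagorean identity and `s = p`.

With `A = ∑_I q_i`, `‖p‖² - ‖q‖² = 2 S A / |I| + S² / |I| - ∑_J q_j²`. If every `q_j` (`j ∈ J`) is
at most every `q_i` (`i ∈ I`), then `|I| ∑_J q_j² ≤ S A`, so the difference is at least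
`S² / |I|`, which vanishes exactly when `q_J = 0`.
-/

noncomputable section

open Finset RealInnerProductSpace

theorem eq_of_mem_projSet_of_pythagoras {n : ℕ} {M : Set (EuclideanSpace ℝ (Fin n))}
    {q p s : EuclideanSpace ℝ (Fin n)} (hp : p ∈ M)
    (hpyth : ∀ v ∈ M, ‖q - v‖ ^ 2 = ‖q - p‖ ^ 2 + ‖p - v‖ ^ 2) (hs : s ∈ projSet M q) :
    s = p := by
  have hsp : ‖q - s‖ ^ 2 ≤ ‖q - p‖ ^ 2 := by
    gcongr
    simpa only [norm_sub_rev q] using hs.2 p hp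
  have hps : ‖p - s‖ ^ 2 = 0 := le_antisymm (by linarith [hpyth s hs.1]) (sq_nonneg _)
  rw [sq_eq_zero_iff, norm_eq_zero, sub_eq_zero] at hps
  exact hps.symm

theorem card_mul_sum_sq_le_sum_mul_sum {ι : Type*} {I J : Finset ι} {f : ι → ℝ}
    (hf : ∀ j ∈ J, 0 ≤ f j) (hle : ∀ j ∈ J, ∀ i ∈ I, f j ≤ f i) :
    #I * ∑ j ∈ J, f j ^ 2 ≤ (∑ j ∈ J, f j) * ∑ i ∈ I, f i := by
  rw [mul_sum, sum_mul]
  refine sum_le_sum fun j hj => ?_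
  calc #I * f j ^ 2 = ∑ _i ∈ I, f j * f j := by simp [sq]
    _ ≤ ∑ i ∈ I, f j * f i :=
        sum_le_sum fun i hi => mul_le_mul_of_nonneg_left (hle j hj i hi) (hf j hj)
    _ = f j * ∑ i ∈ I, f i := (mul_sum ..).symm

theorem sum_eq_sum_univ_of_eq_zero {ι M : Type*} [Fintype ι] [AddCommMonoid M] {I : Finset ι}
    {f : ι → M} (hf : ∀ i ∉ I, f i = 0) : ∑ i ∈ I, f i = ∑ i, f i :=
  sum_subset (subset_univ I) fun i _ hi => hf i hi

section SpreadOnto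

variable {ι : Type*} [Fintype ι] [DecidableEq ι] (I : Finset ι) (q : EuclideanSpace ℝ ι)

def spreadOnto : EuclideanSpace ℝ ι :=
  WithLp.toLp 2 fun i => if i ∈ I then q i + (∑ j ∈ Iᶜ, q j) / #I else 0

variable {I q}

theorem spreadOnto_apply_of_mem {i : ι} (hi : i ∈ I) :
    spreadOnto I q i = q i + (∑ j ∈ Iᶜ, q j) / #I := by
  simp [spreadOnto, hi]

theorem spreadOnto_apply_of_notMem {i : ι} (hi : i ∉ I) : spreadOnto I q i = 0 := by
  simp [spreadOnto, hi]

theorem spreadOnto_eq_self (hq : ∀ j ∉ I, q j = 0) : spreadOnto I q = q := by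
  have hS : ∑ j ∈ Iᶜ, q j = 0 := sum_eq_zero fun j hj => hq j (mem_compl.mp hj)
  ext i
  by_cases hi : i ∈ I
  · simp [spreadOnto_apply_of_mem hi, hS]
  · rw [spreadOnto_apply_of_notMem hi, hq i hi]

theorem spreadOnto_nonneg (hq : ∀ i, 0 ≤ q i) (i : ι) : 0 ≤ spreadOnto I q i := by
  by_cases hi : i ∈ I
  · rw [spreadOnto_apply_of_mem hi]
    exact add_nonneg (hq i) (div_nonneg (sum_nonneg fun j _ => hq j) (Nat.cast_nonneg _))
  · rw [spreadOnto_apply_of_notMem hi]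

theorem sum_spreadOnto (hI : I.Nonempty) : ∑ i, spreadOnto I q i = ∑ i, q i := by
  have hcard : (#I : ℝ) ≠ 0 := Nat.cast_ne_zero.mpr hI.card_pos.ne'
  rw [← sum_eq_sum_univ_of_eq_zero fun i => spreadOnto_apply_of_notMem,
    sum_congr rfl fun i => spreadOnto_apply_of_mem, sum_add_distrib, sum_const, nsmul_eq_mul,
    mul_div_cancel₀ _ hcard, sum_add_sum_compl]

theorem inner_sub_spreadOnto_spreadOnto_sub_eq_zero (hI : I.Nonempty) {v : EuclideanSpace ℝ ι}
    (hv : ∀ i ∉ I, v i = 0) (hsum : ∑ i, v i = ∑ i, q i) :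
    ⟪q - spreadOnto I q, spreadOnto I q - v⟫ = 0 := by
  set p := spreadOnto I q
  set t := (∑ j ∈ Iᶜ, q j) / #I
  calc ⟪q - p, p - v⟫ = ∑ i, (p i - v i) * (q i - p i) := by simp [PiLp.inner_apply]
    _ = ∑ i ∈ I, (p i - v i) * (q i - p i) := by
        refine (sum_subset (subset_univ I) fun i _ hi => ?_).symm
        simp [p, spreadOnto_apply_of_notMem hi, hv i hi]
    _ = ∑ i ∈ I, (p i - v i) * -t := sum_congr rfl fun i hi => by
        rw [spreadOnto_apply_of_mem hi]; ring
    _ = (∑ i, p i - ∑ i, v i) * -t := by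
        rw [← sum_mul, sum_sub_distrib, sum_eq_sum_univ_of_eq_zero hv,
          sum_eq_sum_univ_of_eq_zero fun i => spreadOnto_apply_of_notMem]
    _ = 0 := by rw [sum_spreadOnto hI, hsum, sub_self, zero_mul]

theorem norm_sub_sq_eq_norm_sub_spreadOnto_sq_add (hI : I.Nonempty) {v : EuclideanSpace ℝ ι}
    (hv : ∀ i ∉ I, v i = 0) (hsum : ∑ i, v i = ∑ i, q i) :
    ‖q - v‖ ^ 2 = ‖q - spreadOnto I q‖ ^ 2 + ‖spreadOnto I q - v‖ ^ 2 := by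
  rw [← sub_add_sub_cancel q (spreadOnto I q) v, sq, sq, sq, norm_add_sq_eq_norm_sq_add_norm_sq_real
    (inner_sub_spreadOnto_spreadOnto_sub_eq_zero hI hv hsum)]

theorem sq_sum_compl_div_card_le (hI : I.Nonempty) (hq : ∀ i, 0 ≤ q i)
    (hle : ∀ j ∉ I, ∀ i ∈ I, q j ≤ q i) :
    (∑ j ∈ Iᶜ, q j) ^ 2 / #I ≤ ‖spreadOnto I q‖ ^ 2 - ‖q‖ ^ 2 := by
  set S := ∑ j ∈ Iᶜ, q j
  set A := ∑ i ∈ I, q i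
  set B := ∑ j ∈ Iᶜ, q j ^ 2
  have hcard : (0 : ℝ) < #I := Nat.cast_pos.mpr hI.card_pos
  have hpI : ∑ i ∈ I, spreadOnto I q i ^ 2 = ∑ i ∈ I, (q i + S / #I) ^ 2 :=
    sum_congr rfl fun i hi => by rw [spreadOnto_apply_of_mem hi]
  have hpJ : ∑ j ∈ Iᶜ, spreadOnto I q j ^ 2 = 0 :=
    sum_eq_zero fun j hj => by rw [spreadOnto_apply_of_notMem (mem_compl.mp hj), sq, zero_mul]
  have hdiff : ‖spreadOnto I q‖ ^ 2 - ‖q‖ ^ 2 = 2 * S * A / #I + S ^ 2 / #I - B := by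
    rw [EuclideanSpace.real_norm_sq_eq, EuclideanSpace.real_norm_sq_eq,
      ← sum_add_sum_compl I fun i => spreadOnto I q i ^ 2, ← sum_add_sum_compl I fun i => q i ^ 2,
      hpI, hpJ]
    simp only [add_sq, sum_add_distrib, sum_const, nsmul_eq_mul, ← sum_mul, ← mul_sum]
    field_simp
    ring
  have hB : #I * B ≤ S * A :=
    card_mul_sum_sq_le_sum_mul_sum (fun j _ => hq j) fun j hj => hle j (mem_compl.mp hj)
  have hSA : 0 ≤ S * A := mul_nonneg (sum_nonneg fun j _ => hq j) (sum_nonneg fun i _ => hq i)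
  have : B ≤ 2 * S * A / #I := by rw [le_div_iff₀ hcard]; linarith
  linarith

theorem norm_le_norm_spreadOnto (hI : I.Nonempty) (hq : ∀ i, 0 ≤ q i)
    (hle : ∀ j ∉ I, ∀ i ∈ I, q j ≤ q i) : ‖q‖ ≤ ‖spreadOnto I q‖ := by
  have hgap := sq_sum_compl_div_card_le hI hq hle
  have : 0 ≤ (∑ j ∈ Iᶜ, q j) ^ 2 / #I := by positivity
  exact (pow_le_pow_iff_left₀ (norm_nonneg _) (norm_nonneg _) two_ne_zero).mp (by linarith)

theorem norm_spreadOnto_eq_iff (hI : I.Nonempty) (hq : ∀ i, 0 ≤ q i)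
    (hle : ∀ j ∉ I, ∀ i ∈ I, q j ≤ q i) : ‖spreadOnto I q‖ = ‖q‖ ↔ ∀ j ∉ I, q j = 0 := by
  refine ⟨fun heq j hj => ?_, fun h => by rw [spreadOnto_eq_self h]⟩
  have hgap := sq_sum_compl_div_card_le hI hq hle
  rw [heq, sub_self, div_le_iff₀ (Nat.cast_pos.mpr hI.card_pos), zero_mul] at hgap
  have hS : ∑ j ∈ Iᶜ, q j = 0 := (pow_eq_zero_iff two_ne_zero).mp (le_antisymm hgap (sq_nonneg _))
  exact (sum_eq_zero_iff_of_nonneg fun j _ => hq j).mp hS j (mem_compl.mpr hj)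

end SpreadOnto

theorem proj_onto_simplex_face_general
    {n : ℕ} (l₁ : ℝ)
    (C : Set (EuclideanSpace ℝ (Fin n)))
    (hC : C = {c | (∀ i, 0 ≤ c i) ∧ ∑ i, c i = l₁})
    (I : Set (Fin n)) (hI : I.Nonempty)
    (CI : Set (EuclideanSpace ℝ (Fin n)))
    (hCI : CI = {c ∈ C | ∀ i ∉ I, c i = 0})
    (q : EuclideanSpace ℝ (Fin n)) (hq : q ∈ C)
    (s : EuclideanSpace ℝ (Fin n)) (hs : s ∈ projSet CI q) :
    (∀ v ∈ CI, ‖q - v‖ ^ 2 = ‖q - s‖ ^ 2 + ‖s - v‖ ^ 2) ∧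
      ((∀ j ∉ I, ∀ i ∈ I, q j ≤ q i) →
        (‖q‖ ≤ ‖s‖ ∧ (‖s‖ = ‖q‖ ↔ ∀ j ∉ I, q j = 0))) := by
  obtain ⟨F, rfl⟩ := I.toFinite.exists_finset_coe
  have hF : F.Nonempty := Finset.coe_nonempty.mp hI
  rw [hC] at hq
  obtain ⟨hq_nonneg, hq_sum⟩ := hq
  have hpyth : ∀ v ∈ CI, ‖q - v‖ ^ 2 = ‖q - spreadOnto F q‖ ^ 2 + ‖spreadOnto F q - v‖ ^ 2 := by
    rw [hCI, hC]
    exact fun v ⟨⟨_, hv_sum⟩, hv_zero⟩ =>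
      norm_sub_sq_eq_norm_sub_spreadOnto_sq_add hF hv_zero (hv_sum.trans hq_sum.symm)
  have hp : spreadOnto F q ∈ CI := by
    rw [hCI, hC]
    exact ⟨⟨spreadOnto_nonneg hq_nonneg, (sum_spreadOnto hF).trans hq_sum⟩,
      fun i hi => spreadOnto_apply_of_notMem hi⟩
  obtain rfl := eq_of_mem_projSet_of_pythagoras hp hpyth hs
  exact ⟨hpyth, fun hle =>
    ⟨norm_le_norm_spreadOnto hF hq_nonneg hle, norm_spreadOnto_eq_iff hF hq_nonneg hle⟩⟩

theorem proj_onto_simplex_face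
    {n : ℕ} (l₁ : ℝ) (h1 : 0 < l₁)
    (C : Set (EuclideanSpace ℝ (Fin n)))
    (hC : C = {c | (∀ i, 0 ≤ c i) ∧ ∑ i, c i = l₁})
    (I : Set (Fin n)) (hI : I.Nonempty)
    (CI : Set (EuclideanSpace ℝ (Fin n)))
    (hCI : CI = {c ∈ C | ∀ i ∉ I, c i = 0})
    (q : EuclideanSpace ℝ (Fin n)) (hq : q ∈ C)
    (s : EuclideanSpace ℝ (Fin n)) (hs : s ∈ projSet CI q) :
    (∀ v ∈ CI, ‖q - v‖ ^ 2 = ‖q - s‖ ^ 2 + ‖s - v‖ ^ 2) ∧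
      ((∀ j ∉ I, ∀ i ∈ I, q j ≤ q i) →
        (‖q‖ ≤ ‖s‖ ∧ (‖s‖ = ‖q‖ ↔ ∀ j ∉ I, q j = 0))) :=
  proj_onto_simplex_face_general l₁ C hC I hI CI hCI q hq s hs
end
end

section
/- Let s ∈ L \ C (s is on the hypercircle L = H ∩ K but not in the simplex C) and let r ∈ proj_C(s) with r = max(s − t̂·e, 0) for the separator t̂ given by the simplex-projection characterization. Then t̂ ≥ 0. -/
noncomputable section

/-- Thresholding at a negative level strictly raises every entry, hence the total. -/
theorem nonneg_of_sum_max_sub_le_sum {ι : Type*} {s : Finset ι} (hs : s.Nonempty)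
    {x : ι → ℝ} {t : ℝ} (h : ∑ i ∈ s, max (x i - t) 0 ≤ ∑ i ∈ s, x i) : 0 ≤ t := by
  by_contra! ht
  have hlt : ∑ i ∈ s, x i < ∑ i ∈ s, max (x i - t) 0 :=
    Finset.sum_lt_sum_of_nonempty hs fun i _ => by linarith [le_max_left (x i - t) 0]
  linarith

theorem simplex_projection_separator_nonneg_general
    {n : ℕ} (l₁ l₂ : ℝ) (h1 : 0 < l₁)
    (L C : Set (EuclideanSpace ℝ (Fin n)))
    (hL : L = {q | ∑ i, q i = l₁ ∧ ‖q‖ = l₂})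
    (hC : C = {c | (∀ i, 0 ≤ c i) ∧ ∑ i, c i = l₁})
    (s : EuclideanSpace ℝ (Fin n)) (hsL : s ∈ L)
    (r : EuclideanSpace ℝ (Fin n)) (hr : r ∈ projSet C s)
    (t : ℝ) (ht : r = (WithLp.toLp 2 (fun i => max (s i - t) 0) : EuclideanSpace ℝ (Fin n))) :
    0 ≤ t := by
  subst hL hC
  have hsum_s : ∑ i, s i = l₁ := hsL.1
  have hsum_r : ∑ i, r i = l₁ := hr.1.2
  subst ht
  exact nonneg_of_sum_max_sub_le_sum
    (Finset.nonempty_of_sum_ne_zero (hsum_s ▸ h1.ne')) (hsum_r.trans hsum_s.symm).le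

theorem simplex_projection_separator_nonneg
    {n : ℕ} (l₁ l₂ : ℝ) (h1 : 0 < l₁) (h2 : 0 < l₂)
    (hlow : l₂ ≤ l₁) (hhigh : l₁ ≤ Real.sqrt n * l₂)
    (L C : Set (EuclideanSpace ℝ (Fin n)))
    (hL : L = {q | ∑ i, q i = l₁ ∧ ‖q‖ = l₂})
    (hC : C = {c | (∀ i, 0 ≤ c i) ∧ ∑ i, c i = l₁})
    (s : EuclideanSpace ℝ (Fin n)) (hsL : s ∈ L) (hsC : s ∉ C)
    (r : EuclideanSpace ℝ (Fin n)) (hr : r ∈ projSet C s)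
    (t : ℝ) (ht : r = (WithLp.toLp 2 (fun i => max (s i - t) 0) : EuclideanSpace ℝ (Fin n))) :
    0 ≤ t :=
  simplex_projection_separator_nonneg_general l₁ l₂ h1 L C hL hC s hsL r hr t ht

end
end
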